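/- arXiv:2507.17381 — 2 statements merged into one kernel-verified Lean document; each statement's English description precedes it below -/
import Mathlib

section
/- The function b(τ,x) = (μ/cos(μτ)) cos(x) solves the 1D nonlocal equation ∂_τ b + (∫_{-π}^x b dx̄) ∂_x b − b² + (1/π)∫_{-π}^{π} b² dx = (1/π)(∫_0^τ ∫_{-π}^{π} b² dx dτ̄) b for all τ with cos(μτ) ≠ 0 and all x ∈ [−π,π]. -/
/-!
The ansatz `b τ x = a τ * cos x` separates variables: since `∫_{-π}^x cos = sin x` and
`∫_{-π}^{π} cos² = π`, the transport, quadratic and mean terms combine through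
`sin² x + cos² x = 1` and cancel, and the equation reduces to the ODE `a' = a ∫₀^τ a²`.
For `a τ = μ / cos (μ τ)` one has `∫₀^τ a² = μ tan (μ τ)`, and both sides of the ODE equal
`μ² sin (μ τ) / cos (μ τ)²`.
-/

open Real

theorem nonlocal_residual_of_separable (a : ℝ → ℝ) (τ x : ℝ) :
    deriv (fun t => a t * cos x) τ
      + (∫ y in (-π)..x, a τ * cos y) * deriv (fun x' => a τ * cos x') x
      - (a τ * cos x) ^ 2 + (1 / π) * (∫ y in (-π)..π, (a τ * cos y) ^ 2)
      - (1 / π) * (∫ σ in (0:ℝ)..τ, ∫ y in (-π)..π, (a σ * cos y) ^ 2) * (a τ * cos x)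
    = (deriv a τ - a τ * ∫ σ in (0:ℝ)..τ, a σ ^ 2) * cos x := by
  have integral_sq (c : ℝ) : ∫ y in (-π)..π, (c * cos y) ^ 2 = c ^ 2 * π := by
    simp only [mul_pow, intervalIntegral.integral_const_mul, integral_cos_sq]
    simp
  have hdx : deriv (fun x' => a τ * cos x') x = -(a τ * sin x) := by
    simp
  have hint : ∫ y in (-π)..x, a τ * cos y = a τ * sin x := by
    simp [integral_cos]
  simp only [integral_sq, intervalIntegral.integral_mul_const, deriv_mul_const_field, hdx, hint]
  field_simp
  linear_combination -(a τ ^ 2) * sin_sq_add_cos_sq x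

theorem hasDerivAt_div_cos_mul (μ τ : ℝ) (hτ : cos (μ * τ) ≠ 0) :
    HasDerivAt (fun t => μ / cos (μ * t)) (μ ^ 2 * sin (μ * τ) / cos (μ * τ) ^ 2) τ := by
  have hcos : HasDerivAt (fun t => cos (μ * t)) (-sin (μ * τ) * μ) τ :=
    ((hasDerivAt_id τ).const_mul μ).cos.congr_deriv (by simp)
  exact ((hasDerivAt_const τ μ).div hcos hτ).congr_deriv (by ring)

theorem integral_div_cos_mul_sq (μ τ : ℝ) (hτ : ∀ σ ∈ Set.uIcc 0 τ, cos (μ * σ) ≠ 0) :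
    ∫ σ in (0:ℝ)..τ, (μ / cos (μ * σ)) ^ 2 = μ * tan (μ * τ) := by
  have hderiv : ∀ σ ∈ Set.uIcc 0 τ,
      HasDerivAt (fun s => μ * tan (μ * s)) ((μ / cos (μ * σ)) ^ 2) σ := by
    intro σ hσ
    have htan := (hasDerivAt_tan (hτ σ hσ)).comp σ ((hasDerivAt_id σ).const_mul μ)
    exact (htan.const_mul μ).congr_deriv (by rw [mul_one]; ring)
  have hcont : ContinuousOn (fun σ => (μ / cos (μ * σ)) ^ 2) (Set.uIcc 0 τ) :=
    (continuousOn_const.div (by fun_prop) hτ).pow 2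
  rw [intervalIntegral.integral_eq_sub_of_hasDerivAt hderiv hcont.intervalIntegrable]
  simp

theorem deriv_div_cos_mul_eq (μ τ : ℝ) (hτ : ∀ σ ∈ Set.uIcc 0 τ, cos (μ * σ) ≠ 0) :
    deriv (fun t => μ / cos (μ * t)) τ
      = μ / cos (μ * τ) * ∫ σ in (0:ℝ)..τ, (μ / cos (μ * σ)) ^ 2 := by
  have hc : cos (μ * τ) ≠ 0 := hτ τ Set.right_mem_uIcc
  rw [(hasDerivAt_div_cos_mul μ τ hc).deriv, integral_div_cos_mul_sq μ τ hτ, tan_eq_sin_div_cos]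
  field_simp

theorem stmt0_general (μ : ℝ) (b : ℝ → ℝ → ℝ)
    (hb : ∀ τ x, b τ x = μ / Real.cos (μ * τ) * Real.cos x)
    (τ : ℝ) (hτ : ∀ σ ∈ Set.uIcc 0 τ, Real.cos (μ * σ) ≠ 0)
    (x : ℝ) :
    deriv (fun τ' => b τ' x) τ
      + (∫ y in (-π)..x, b τ y) * deriv (fun x' => b τ x') x
      - (b τ x) ^ 2 + (1 / π) * ∫ y in (-π)..π, (b τ y) ^ 2
    = (1 / π) * (∫ σ in (0:ℝ)..τ, ∫ y in (-π)..π, (b σ y) ^ 2) * b τ x := by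
  have hresidual := nonlocal_residual_of_separable (fun t => μ / cos (μ * t)) τ x
  rw [deriv_div_cos_mul_eq μ τ hτ, sub_self, zero_mul] at hresidual
  simp only [hb]
  exact sub_eq_zero.mp hresidual

theorem stmt0 (μ : ℝ) (hμ : μ ≠ 0) (b : ℝ → ℝ → ℝ)
    (hb : ∀ τ x, b τ x = μ / Real.cos (μ * τ) * Real.cos x)
    (τ : ℝ) (hτ : ∀ σ ∈ Set.uIcc 0 τ, Real.cos (μ * σ) ≠ 0)
    (x : ℝ) (hx : x ∈ Set.Icc (-π) π) :
    deriv (fun τ' => b τ' x) τ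
      + (∫ y in (-π)..x, b τ y) * deriv (fun x' => b τ x') x
      - (b τ x) ^ 2 + (1 / π) * ∫ y in (-π)..π, (b τ y) ^ 2
    = (1 / π) * (∫ σ in (0:ℝ)..τ, ∫ y in (-π)..π, (b σ y) ^ 2) * b τ x :=
  stmt0_general μ b hb τ hτ x
end

section
/- Let C > 0, θ ∈ (0,1), and set W̃(x) = exp(Cx/θ). Then for every x ∈ [0, 2π/3], sin(x) ∫₀ˣ sin²(x̄/2) sin(x̄) exp(Cx̄/θ) dx̄ ≤ (θ/C) sin²(x/2) sin(x) exp(Cx/θ). -/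
/-!
With `f y = sin² (y/2) sin y`, the integrand is `f y · exp (a y)` for `a = C/θ`. Since `f` is
nondecreasing on `[0, 2π/3]`, the integral is at most `f x ∫₀ˣ exp (a y) dy ≤ f x exp (a x) / a`,
and the factor `sin x ≤ 1` in front only helps because the integral is nonnegative.
Monotonicity of `f`: writing `t = sin² (y/2)`, one has `f² = 4 t³ (1 - t)`, which increases
in `t` on `[0, 3/4]`, and `t ≤ 3/4` exactly when `y ≤ 2π/3`.
-/

open Real Set

lemma integral_exp_mul_le_div {a : ℝ} (ha : 0 < a) (x : ℝ) :
    ∫ y in (0:ℝ)..x, exp (a * y) ≤ exp (a * x) / a := by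
  rw [intervalIntegral.integral_comp_mul_left (fun t => exp t) ha.ne', mul_zero, integral_exp,
    exp_zero, smul_eq_mul, inv_mul_eq_div]
  gcongr
  linarith

lemma integral_mul_exp_le_of_le {f : ℝ → ℝ} {a x : ℝ} (ha : 0 < a) (hx : 0 ≤ x)
    (hf : ∀ y ∈ Icc 0 x, f y ≤ f x) (hfx : 0 ≤ f x)
    (hint : IntervalIntegrable (fun y => f y * exp (a * y)) MeasureTheory.volume 0 x) :
    ∫ y in (0:ℝ)..x, f y * exp (a * y) ≤ f x * exp (a * x) / a :=
  calc ∫ y in (0:ℝ)..x, f y * exp (a * y)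
      ≤ ∫ y in (0:ℝ)..x, f x * exp (a * y) :=
        intervalIntegral.integral_mono_on hx hint
          (Continuous.intervalIntegrable (by fun_prop) _ _) fun y hy =>
          mul_le_mul_of_nonneg_right (hf y hy) (exp_nonneg _)
    _ = f x * ∫ y in (0:ℝ)..x, exp (a * y) := intervalIntegral.integral_const_mul _ _
    _ ≤ f x * (exp (a * x) / a) := by gcongr; exact integral_exp_mul_le_div ha x
    _ = f x * exp (a * x) / a := by ring

lemma pow_three_mul_one_sub_le {s t : ℝ} (hs : 0 ≤ s) (hst : s ≤ t) (ht : t ≤ 3 / 4) :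
    s ^ 3 * (1 - s) ≤ t ^ 3 * (1 - t) := by
  have hts : 0 ≤ t - s := by linarith
  nlinarith [mul_nonneg (mul_nonneg hts (by linarith : (0:ℝ) ≤ 3 / 4 - t)) (sq_nonneg t),
    mul_nonneg (mul_nonneg hts (by linarith : (0:ℝ) ≤ 3 / 4 - t)) (mul_nonneg (hs.trans hst) hs),
    mul_nonneg (mul_nonneg hts (by linarith : (0:ℝ) ≤ 3 / 4 - s)) (sq_nonneg s),
    mul_nonneg hts (sq_nonneg (t - s)),
    mul_nonneg (mul_nonneg hts (by linarith : (0:ℝ) ≤ 3 / 4 - s)) (mul_nonneg (hs.trans hst) hs)]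

lemma sq_sin_half_sq_mul_sin (y : ℝ) :
    (sin (y / 2) ^ 2 * sin y) ^ 2 = 4 * (sin (y / 2) ^ 2) ^ 3 * (1 - sin (y / 2) ^ 2) := by
  have hsin : sin y = 2 * sin (y / 2) * cos (y / 2) := by rw [← sin_two_mul]; ring_nf
  rw [hsin]
  linear_combination 4 * sin (y / 2) ^ 6 * cos_sq' (y / 2)

lemma sin_half_sq_le_three_fourths {x : ℝ} (hx₀ : 0 ≤ x) (hx : x ≤ 2 * π / 3) :
    sin (x / 2) ^ 2 ≤ 3 / 4 := by
  have hcos : 1 / 2 ≤ cos (x / 2) := by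
    rw [← cos_pi_div_three]
    exact cos_le_cos_of_nonneg_of_le_pi (by linarith) (by linarith [pi_pos]) (by linarith)
  nlinarith [sin_sq_add_cos_sq (x / 2)]

lemma sin_half_sq_mul_sin_nonneg {y : ℝ} (hy₀ : 0 ≤ y) (hy : y ≤ π) :
    0 ≤ sin (y / 2) ^ 2 * sin y :=
  mul_nonneg (sq_nonneg _) (sin_nonneg_of_nonneg_of_le_pi hy₀ hy)

lemma monotoneOn_sin_half_sq_mul_sin :
    MonotoneOn (fun y => sin (y / 2) ^ 2 * sin y) (Icc 0 (2 * π / 3)) := by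
  intro y ⟨hy₀, hy⟩ x ⟨hx₀, hx⟩ hyx
  have hpi := pi_pos
  have hhalf : sin (y / 2) ≤ sin (x / 2) :=
    sin_le_sin_of_le_of_le_pi_div_two (by linarith) (by linarith) (by linarith)
  have hsq : sin (y / 2) ^ 2 ≤ sin (x / 2) ^ 2 :=
    pow_le_pow_left₀ (sin_nonneg_of_nonneg_of_le_pi (by linarith) (by linarith)) hhalf 2
  rw [← pow_le_pow_iff_left₀ (sin_half_sq_mul_sin_nonneg hy₀ (by linarith))
    (sin_half_sq_mul_sin_nonneg hx₀ (by linarith)) two_ne_zero,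
    sq_sin_half_sq_mul_sin, sq_sin_half_sq_mul_sin, mul_assoc, mul_assoc]
  exact mul_le_mul_of_nonneg_left
    (pow_three_mul_one_sub_le (sq_nonneg _) hsq (sin_half_sq_le_three_fourths hx₀ hx)) four_pos.le

theorem stmt13 (C θ : ℝ) (hC : 0 < C) (hθ : θ ∈ Set.Ioo (0:ℝ) 1) :
    ∀ x ∈ Set.Icc 0 (2 * π / 3),
      Real.sin x * ∫ y in (0:ℝ)..x,
          Real.sin (y / 2) ^ 2 * Real.sin y * Real.exp (C * y / θ)
        ≤ θ / C * (Real.sin (x / 2) ^ 2 * Real.sin x * Real.exp (C * x / θ)) := by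
  intro x hx
  have hpi := pi_pos
  have ha : 0 < C / θ := div_pos hC hθ.1
  simp only [mul_div_right_comm C]
  set I := ∫ y in (0:ℝ)..x, sin (y / 2) ^ 2 * sin y * exp (C / θ * y)
  have hI : 0 ≤ I := intervalIntegral.integral_nonneg hx.1 fun y hy =>
    mul_nonneg (sin_half_sq_mul_sin_nonneg hy.1 (by linarith [hy.2, hx.2])) (exp_nonneg _)
  have hbound : I ≤ sin (x / 2) ^ 2 * sin x * exp (C / θ * x) / (C / θ) :=
    integral_mul_exp_le_of_le ha hx.1
      (fun y hy => monotoneOn_sin_half_sq_mul_sin ⟨hy.1, hy.2.trans hx.2⟩ hx hy.2)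
      (sin_half_sq_mul_sin_nonneg hx.1 (by linarith [hx.2]))
      (Continuous.intervalIntegrable (by fun_prop) _ _)
  calc sin x * I ≤ I := mul_le_of_le_one_left hI (sin_le_one x)
    _ ≤ _ := hbound
    _ = _ := by rw [div_div_eq_mul_div]; ring
end
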